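/- For every integer z ≥ 3, the Coxeter–Schläfli matrix M(2z,2z,2z) is invertible, and its inverse N = M(2z,2z,2z)⁻¹ satisfies N₀₀ > 0, N₃₃ > 0, N₁₁ < 0 and N₂₂ < 0. (Geometrically: the vertices A₀ and A₃ of the orthoscheme O(2z) are outer points of hyperbolic space and must be truncated by their polar planes, while A₁ and A₂ are proper points.) -/

import Mathlib

open Real Matrix

/-- The Coxeter–Schläfli matrix `M(u,v,w)`. -/
noncomputable def coxeterSchlafli (u v w : ℕ) : Matrix (Fin 4) (Fin 4) ℝ :=
  !![1, -Real.cos (π / u), 0, 0;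
     -Real.cos (π / u), 1, -Real.cos (π / v), 0;
     0, -Real.cos (π / v), 1, -Real.cos (π / w);
     0, 0, -Real.cos (π / w), 1]

/-!
A diagonal entry of `M⁻¹` is the complementary principal minor of `M` divided by `det M`.
Writing `a, b, c` for the three cosines, the principal 3×3 minors of `M(u,v,w)` are
`1 - b² - c²`, `1 - c²`, `1 - a²`, `1 - a² - b²`, and `det M = (1 - a²)(1 - c²) - b²`.
For `a = b = c = cos (π / n)` with `n > 4` we have `1/2 < c² < 1`, so `det M < 0`,
the outer minors `1 - 2c²` are negative and the inner minors `1 - c²` are positive.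
-/

theorem Matrix.inv_apply_self_eq_det_submatrix_div_det {K : Type*} [Field K] {n : ℕ}
    (A : Matrix (Fin (n + 1)) (Fin (n + 1)) K) (i : Fin (n + 1)) :
    A⁻¹ i i = (A.submatrix i.succAbove i.succAbove).det / A.det := by
  rw [inv_def, smul_apply, adjugate_fin_succ_eq_det_submatrix, Ring.inverse_eq_inv,
    Even.neg_one_pow ⟨i, rfl⟩, one_mul, smul_eq_mul, inv_mul_eq_div]

section

variable (u v w : ℕ)

theorem det_coxeterSchlafli :
    (coxeterSchlafli u v w).det =
      (1 - cos (π / u) ^ 2) * (1 - cos (π / w) ^ 2) - cos (π / v) ^ 2 := by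
  simp [coxeterSchlafli, det_succ_row_zero, Fin.sum_univ_succ, Fin.succAbove]
  ring

theorem coxeterSchlafli_inv_zero_zero :
    (coxeterSchlafli u v w)⁻¹ 0 0 =
      (1 - cos (π / v) ^ 2 - cos (π / w) ^ 2) / (coxeterSchlafli u v w).det := by
  rw [inv_apply_self_eq_det_submatrix_div_det, det_fin_three]
  congr 1
  simp [coxeterSchlafli]
  ring

theorem coxeterSchlafli_inv_one_one :
    (coxeterSchlafli u v w)⁻¹ 1 1 = (1 - cos (π / w) ^ 2) / (coxeterSchlafli u v w).det := by
  rw [inv_apply_self_eq_det_submatrix_div_det, det_fin_three]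
  congr 1
  simp [coxeterSchlafli, Fin.succAbove]
  ring

theorem coxeterSchlafli_inv_two_two :
    (coxeterSchlafli u v w)⁻¹ 2 2 = (1 - cos (π / u) ^ 2) / (coxeterSchlafli u v w).det := by
  rw [inv_apply_self_eq_det_submatrix_div_det, det_fin_three]
  congr 1
  simp [coxeterSchlafli, Fin.succAbove]
  ring

theorem coxeterSchlafli_inv_three_three :
    (coxeterSchlafli u v w)⁻¹ 3 3 =
      (1 - cos (π / u) ^ 2 - cos (π / v) ^ 2) / (coxeterSchlafli u v w).det := by
  rw [inv_apply_self_eq_det_submatrix_div_det, det_fin_three]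
  congr 1
  simp [coxeterSchlafli, Fin.succAbove]
  ring

end

theorem cos_pi_div_sq_lt_one {n : ℕ} (hn : 1 < n) : cos (π / n) ^ 2 < 1 := by
  have hsin : 0 < sin (π / n) :=
    sin_pos_of_pos_of_lt_pi (by positivity) (div_lt_self pi_pos (by exact_mod_cast hn))
  nlinarith [sin_sq_add_cos_sq (π / n)]

theorem one_half_lt_cos_pi_div_sq {n : ℕ} (hn : 4 < n) : 1 / 2 < cos (π / n) ^ 2 := by
  have hcos : 0 < cos (2 * (π / n)) := by
    have hn' : (4 : ℝ) < n := by exact_mod_cast hn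
    apply cos_pos_of_mem_Ioo
    constructor
    · linarith [show 0 < π / n by positivity, pi_pos]
    · rw [mul_div_assoc', div_lt_div_iff₀ (by linarith) two_pos]
      nlinarith [pi_pos]
  rw [cos_two_mul] at hcos
  linarith

theorem det_coxeterSchlafli_self_neg {n : ℕ} (hn : 4 < n) : (coxeterSchlafli n n n).det < 0 := by
  have h₁ := one_half_lt_cos_pi_div_sq hn
  have h₂ := cos_pi_div_sq_lt_one (by omega : 1 < n)
  rw [det_coxeterSchlafli]
  nlinarith

theorem coxeterSchlafli_inv_diag (z : ℕ) (hz : 3 ≤ z) :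
    IsUnit (coxeterSchlafli (2*z) (2*z) (2*z)).det ∧
    0 < (coxeterSchlafli (2*z) (2*z) (2*z))⁻¹ 0 0 ∧
    0 < (coxeterSchlafli (2*z) (2*z) (2*z))⁻¹ 3 3 ∧
    (coxeterSchlafli (2*z) (2*z) (2*z))⁻¹ 1 1 < 0 ∧
    (coxeterSchlafli (2*z) (2*z) (2*z))⁻¹ 2 2 < 0 := by
  have hn : 4 < 2 * z := by omega
  have hdet := det_coxeterSchlafli_self_neg hn
  have hc_gt := one_half_lt_cos_pi_div_sq hn
  have hc_lt := cos_pi_div_sq_lt_one (by omega : 1 < 2 * z)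
  rw [coxeterSchlafli_inv_zero_zero, coxeterSchlafli_inv_three_three,
    coxeterSchlafli_inv_one_one, coxeterSchlafli_inv_two_two]
  refine ⟨hdet.ne.isUnit, div_pos_of_neg_of_neg ?_ hdet, div_pos_of_neg_of_neg ?_ hdet,
    div_neg_of_pos_of_neg ?_ hdet, div_neg_of_pos_of_neg ?_ hdet⟩ <;> linarith
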